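/- arXiv:2402.06244 — 5 statements merged into one kernel-verified Lean document; each statement's English description precedes it below -/
import Mathlib

section
/- Let ζ¹, ζ² : ℝ^{d₁} → ℝ and ℝ^{d₂} → ℝ be functions that are Lipschitz with constants τ¹ > 0 and τ² > 0 respectively (with respect to the ℓ₂ norm). Let c¹, c² > 0 and β ∈ ℝ, and suppose x = (x¹, x²) satisfies c¹·ζ¹(x¹) + c²·ζ²(x²) + β > 0. Then for every x' = (x'¹, x'²) satisfying c¹·ζ¹(x'¹) + c²·ζ²(x'²) + β = 0, we have ‖x − x'‖₂ ≥ (c¹·ζ¹(x¹) + c²·ζ²(x²) + β) / √((c¹τ¹)² + (c²τ²)²). -/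
/-! Subtracting the defining equation of `x'` writes the margin at `x` as
`c₁ (ζ₁ x₁ - ζ₁ x₁') + c₂ (ζ₂ x₂ - ζ₂ x₂')`. The Lipschitz bounds make this at most
`|c₁ τ₁| ‖x₁ - x₁'‖ + |c₂ τ₂| ‖x₂ - x₂'‖`, and Cauchy–Schwarz in `ℝ²` bounds that by
`√((c₁ τ₁)² + (c₂ τ₂)²) · ‖x - x'‖₂`. -/

lemma mul_add_mul_le_sqrt_mul_sqrt (p q a b : ℝ) :
    p * a + q * b ≤ √(p ^ 2 + q ^ 2) * √(a ^ 2 + b ^ 2) := by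
  simpa [Fin.sum_univ_two] using Real.sum_mul_le_sqrt_mul_sqrt Finset.univ ![p, q] ![a, b]

lemma mul_sub_le_abs_mul_mul_norm {E : Type*} [SeminormedAddCommGroup E] {ζ : E → ℝ} {τ : ℝ}
    (hζ : ∀ u v, |ζ u - ζ v| ≤ τ * ‖u - v‖) (c : ℝ) (u v : E) :
    c * (ζ u - ζ v) ≤ |c * τ| * ‖u - v‖ :=
  calc c * (ζ u - ζ v) ≤ |c| * |ζ u - ζ v| := by rw [← abs_mul]; exact le_abs_self _
    _ ≤ |c| * (τ * ‖u - v‖) := by gcongr; exact hζ u v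
    _ ≤ |c| * (|τ| * ‖u - v‖) := by gcongr; exact le_abs_self τ
    _ = |c * τ| * ‖u - v‖ := by rw [abs_mul, mul_assoc]

theorem stmt_0_general {d₁ d₂ : ℕ}
    (ζ₁ : EuclideanSpace ℝ (Fin d₁) → ℝ) (ζ₂ : EuclideanSpace ℝ (Fin d₂) → ℝ)
    (τ₁ τ₂ : ℝ)
    (hL₁ : ∀ u v, |ζ₁ u - ζ₁ v| ≤ τ₁ * ‖u - v‖)
    (hL₂ : ∀ u v, |ζ₂ u - ζ₂ v| ≤ τ₂ * ‖u - v‖)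
    (c₁ c₂ β : ℝ)
    (x₁ : EuclideanSpace ℝ (Fin d₁)) (x₂ : EuclideanSpace ℝ (Fin d₂)) :
    ∀ (x₁' : EuclideanSpace ℝ (Fin d₁)) (x₂' : EuclideanSpace ℝ (Fin d₂)),
      c₁ * ζ₁ x₁' + c₂ * ζ₂ x₂' + β = 0 →
      Real.sqrt (‖x₁ - x₁'‖ ^ 2 + ‖x₂ - x₂'‖ ^ 2) ≥
        (c₁ * ζ₁ x₁ + c₂ * ζ₂ x₂ + β) / Real.sqrt ((c₁ * τ₁) ^ 2 + (c₂ * τ₂) ^ 2) := by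
  intro x₁' x₂' h₀
  refine div_le_of_le_mul₀ (Real.sqrt_nonneg _) (Real.sqrt_nonneg _) ?_
  calc c₁ * ζ₁ x₁ + c₂ * ζ₂ x₂ + β = c₁ * (ζ₁ x₁ - ζ₁ x₁') + c₂ * (ζ₂ x₂ - ζ₂ x₂') := by
        linear_combination h₀
    _ ≤ |c₁ * τ₁| * ‖x₁ - x₁'‖ + |c₂ * τ₂| * ‖x₂ - x₂'‖ :=
        add_le_add (mul_sub_le_abs_mul_mul_norm hL₁ c₁ x₁ x₁')
          (mul_sub_le_abs_mul_mul_norm hL₂ c₂ x₂ x₂')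
    _ ≤ √(|c₁ * τ₁| ^ 2 + |c₂ * τ₂| ^ 2) * √(‖x₁ - x₁'‖ ^ 2 + ‖x₂ - x₂'‖ ^ 2) :=
        mul_add_mul_le_sqrt_mul_sqrt _ _ _ _
    _ = √(‖x₁ - x₁'‖ ^ 2 + ‖x₂ - x₂'‖ ^ 2) * √((c₁ * τ₁) ^ 2 + (c₂ * τ₂) ^ 2) := by
        rw [sq_abs, sq_abs, mul_comm]

theorem stmt_0 {d₁ d₂ : ℕ}
    (ζ₁ : EuclideanSpace ℝ (Fin d₁) → ℝ) (ζ₂ : EuclideanSpace ℝ (Fin d₂) → ℝ)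
    (τ₁ τ₂ : ℝ) (hτ₁ : 0 < τ₁) (hτ₂ : 0 < τ₂)
    (hL₁ : ∀ u v, |ζ₁ u - ζ₁ v| ≤ τ₁ * ‖u - v‖)
    (hL₂ : ∀ u v, |ζ₂ u - ζ₂ v| ≤ τ₂ * ‖u - v‖)
    (c₁ c₂ β : ℝ) (hc₁ : 0 < c₁) (hc₂ : 0 < c₂)
    (x₁ : EuclideanSpace ℝ (Fin d₁)) (x₂ : EuclideanSpace ℝ (Fin d₂))
    (hx : 0 < c₁ * ζ₁ x₁ + c₂ * ζ₂ x₂ + β) :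
    ∀ (x₁' : EuclideanSpace ℝ (Fin d₁)) (x₂' : EuclideanSpace ℝ (Fin d₂)),
      c₁ * ζ₁ x₁' + c₂ * ζ₂ x₂' + β = 0 →
      Real.sqrt (‖x₁ - x₁'‖ ^ 2 + ‖x₂ - x₂'‖ ^ 2) ≥
        (c₁ * ζ₁ x₁ + c₂ * ζ₂ x₂ + β) / Real.sqrt ((c₁ * τ₁) ^ 2 + (c₂ * τ₂) ^ 2) :=
  stmt_0_general ζ₁ ζ₂ τ₁ τ₂ hL₁ hL₂ c₁ c₂ β x₁ x₂
end

section
/- Let ζ¹ : ℝ^{d₁} → ℝ and ζ² : ℝ^{d₂} → ℝ be Lipschitz with constants τ¹, τ² > 0, let c¹, c² > 0 and β ∈ ℝ, and suppose c¹·ζ¹(x¹) + c²·ζ²(x²) + β > 0 for a point x = (x¹, x²). Then for every perturbation x'¹ of the first modality only, satisfying c¹·ζ¹(x'¹) + c²·ζ²(x²) + β = 0, one has ‖x¹ − x'¹‖₂ ≥ (c¹·ζ¹(x¹) + c²·ζ²(x²) + β) / (c¹·τ¹). -/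
theorem div_le_norm_sub_of_map_eq_zero {E : Type*} [SeminormedAddCommGroup E] {g : E → ℝ}
    {K : ℝ} (hK : 0 < K) (hg : ∀ u v, g u - g v ≤ K * ‖u - v‖) {x y : E} (hy : g y = 0) :
    g x / K ≤ ‖x - y‖ := by
  rw [div_le_iff₀' hK]
  simpa [hy] using hg x y

theorem stmt_1_general {d₁ d₂ : ℕ}
    (ζ₁ : EuclideanSpace ℝ (Fin d₁) → ℝ) (ζ₂ : EuclideanSpace ℝ (Fin d₂) → ℝ)
    (τ₁ : ℝ) (hτ₁ : 0 < τ₁)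
    (hL₁ : ∀ u v, |ζ₁ u - ζ₁ v| ≤ τ₁ * ‖u - v‖)
    (c₁ c₂ β : ℝ) (hc₁ : 0 < c₁)
    (x₁ : EuclideanSpace ℝ (Fin d₁)) (x₂ : EuclideanSpace ℝ (Fin d₂)) :
    ∀ x₁' : EuclideanSpace ℝ (Fin d₁),
      c₁ * ζ₁ x₁' + c₂ * ζ₂ x₂ + β = 0 →
      ‖x₁ - x₁'‖ ≥ (c₁ * ζ₁ x₁ + c₂ * ζ₂ x₂ + β) / (c₁ * τ₁) := by
  intro x₁' hx₁'
  have hmargin : ∀ u v, (c₁ * ζ₁ u + c₂ * ζ₂ x₂ + β) - (c₁ * ζ₁ v + c₂ * ζ₂ x₂ + β)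
      ≤ c₁ * τ₁ * ‖u - v‖ := fun u v => by
    have := mul_le_mul_of_nonneg_left (le_of_abs_le (hL₁ u v)) hc₁.le
    linarith
  exact div_le_norm_sub_of_map_eq_zero (g := fun u => c₁ * ζ₁ u + c₂ * ζ₂ x₂ + β)
    (mul_pos hc₁ hτ₁) hmargin hx₁'

theorem stmt_1 {d₁ d₂ : ℕ}
    (ζ₁ : EuclideanSpace ℝ (Fin d₁) → ℝ) (ζ₂ : EuclideanSpace ℝ (Fin d₂) → ℝ)
    (τ₁ τ₂ : ℝ) (hτ₁ : 0 < τ₁) (hτ₂ : 0 < τ₂)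
    (hL₁ : ∀ u v, |ζ₁ u - ζ₁ v| ≤ τ₁ * ‖u - v‖)
    (hL₂ : ∀ u v, |ζ₂ u - ζ₂ v| ≤ τ₂ * ‖u - v‖)
    (c₁ c₂ β : ℝ) (hc₁ : 0 < c₁) (hc₂ : 0 < c₂)
    (x₁ : EuclideanSpace ℝ (Fin d₁)) (x₂ : EuclideanSpace ℝ (Fin d₂))
    (hx : 0 < c₁ * ζ₁ x₁ + c₂ * ζ₂ x₂ + β) :
    ∀ x₁' : EuclideanSpace ℝ (Fin d₁),
      c₁ * ζ₁ x₁' + c₂ * ζ₂ x₂ + β = 0 →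
      ‖x₁ - x₁'‖ ≥ (c₁ * ζ₁ x₁ + c₂ * ζ₂ x₂ + β) / (c₁ * τ₁) :=
  stmt_1_general ζ₁ ζ₂ τ₁ hτ₁ hL₁ c₁ c₂ β hc₁ x₁ x₂
end

section
/- Let ζ¹, ζ² be Lipschitz with constants τ¹, τ² > 0, and c¹, c² > 0, β ∈ ℝ. Suppose x = (x¹, x²) satisfies c¹ζ¹(x¹) + c²ζ²(x²) + β > 0 and ζ² is continuous. Let x' = (x'¹, x'²) be a minimizer of ‖x − x'‖₂ subject to c¹ζ¹(x'¹) + c²ζ²(x'²) + β = 0 (assume a minimizer exists). Then ζ¹(x'¹) ≤ ζ¹(x¹) and ζ²(x'²) ≤ ζ²(x²). -/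
/-! If the first modality's margin increased at a nearest boundary point `x'`, then `(x¹, x'²)`
would already lie on the negative side of the boundary while `x` lies on the positive side, so by
the intermediate value theorem the boundary meets the segment from `x'²` to `x²`. Moving only the
second modality to that point is a strictly shorter feasible perturbation, contradicting
minimality. The argument for the second modality is symmetric. -/

theorem Continuous.exists_mem_segment_eq_zero {F : Type*} [AddCommGroup F] [Module ℝ F]
    [TopologicalSpace F] [IsTopologicalAddGroup F] [ContinuousSMul ℝ F] {g : F → ℝ}
    (hg : Continuous g) {a b : F} (ha : g a ≤ 0) (hb : 0 ≤ g b) :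
    ∃ y ∈ segment ℝ a b, g y = 0 :=
  (convex_segment a b).isPreconnected.intermediate_value (left_mem_segment ℝ a b)
    (right_mem_segment ℝ a b) hg.continuousOn ⟨ha, hb⟩

theorem apply_le_apply_of_minimal_perturbation {E F : Type*} [NormedAddCommGroup E]
    [NormedAddCommGroup F] [NormedSpace ℝ F] (f : E → ℝ) {g : F → ℝ} (hg : Continuous g)
    {x₁ x₁' : E} {x₂ x₂' : F} (hx : 0 < f x₁ + g x₂) (hfeas : f x₁' + g x₂' = 0)
    (hmin : ∀ y₂, f x₁ + g y₂ = 0 → ‖x₁ - x₁'‖ ^ 2 + ‖x₂ - x₂'‖ ^ 2 ≤ ‖x₂ - y₂‖ ^ 2) :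
    f x₁' ≤ f x₁ := by
  by_contra! hlt
  have hne : 0 < ‖x₁ - x₁'‖ := norm_pos_iff.2 (sub_ne_zero.2 fun h ↦ hlt.ne (h ▸ rfl))
  obtain ⟨y₂, hy₂, hy₂_zero⟩ := (continuous_const.add hg).exists_mem_segment_eq_zero
    (a := x₂') (b := x₂) (g := fun y ↦ f x₁ + g y) (by linarith) hx.le
  have hcloser : ‖x₂ - y₂‖ ≤ ‖x₂ - x₂'‖ := by
    simpa only [norm_sub_rev x₂] using norm_sub_le_of_mem_segment (segment_symm ℝ x₂' x₂ ▸ hy₂)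
  linarith [hmin y₂ hy₂_zero, pow_le_pow_left₀ (norm_nonneg _) hcloser 2, pow_pos hne 2]

theorem stmt_4_general {d₁ d₂ : ℕ}
    (ζ₁ : EuclideanSpace ℝ (Fin d₁) → ℝ) (ζ₂ : EuclideanSpace ℝ (Fin d₂) → ℝ)
    (τ₁ : ℝ)
    (hL₁ : ∀ u v, |ζ₁ u - ζ₁ v| ≤ τ₁ * ‖u - v‖)
    (c₁ c₂ β : ℝ) (hc₁ : 0 < c₁) (hc₂ : 0 < c₂)
    (x₁ : EuclideanSpace ℝ (Fin d₁)) (x₂ : EuclideanSpace ℝ (Fin d₂))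
    (hx : 0 < c₁ * ζ₁ x₁ + c₂ * ζ₂ x₂ + β)
    (hcont : Continuous ζ₂)
    (x₁' : EuclideanSpace ℝ (Fin d₁)) (x₂' : EuclideanSpace ℝ (Fin d₂))
    (hfeas : c₁ * ζ₁ x₁' + c₂ * ζ₂ x₂' + β = 0)
    (hmin : ∀ (y₁ : EuclideanSpace ℝ (Fin d₁)) (y₂ : EuclideanSpace ℝ (Fin d₂)),
      c₁ * ζ₁ y₁ + c₂ * ζ₂ y₂ + β = 0 →
      Real.sqrt (‖x₁ - x₁'‖ ^ 2 + ‖x₂ - x₂'‖ ^ 2) ≤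
        Real.sqrt (‖x₁ - y₁‖ ^ 2 + ‖x₂ - y₂‖ ^ 2)) :
    ζ₁ x₁' ≤ ζ₁ x₁ ∧ ζ₂ x₂' ≤ ζ₂ x₂ := by
  have hcont₁ : Continuous ζ₁ := (LipschitzWith.of_dist_le' (K := τ₁) fun u v ↦ by
    rw [Real.dist_eq, dist_eq_norm]; exact hL₁ u v).continuous
  have hmin_sq : ∀ y₁ y₂, c₁ * ζ₁ y₁ + c₂ * ζ₂ y₂ + β = 0 →
      ‖x₁ - x₁'‖ ^ 2 + ‖x₂ - x₂'‖ ^ 2 ≤ ‖x₁ - y₁‖ ^ 2 + ‖x₂ - y₂‖ ^ 2 :=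
    fun y₁ y₂ hy ↦ (Real.sqrt_le_sqrt_iff (by positivity)).1 (hmin y₁ y₂ hy)
  constructor
  · refine le_of_mul_le_mul_left ?_ hc₁
    refine apply_le_apply_of_minimal_perturbation (fun u ↦ c₁ * ζ₁ u)
      (g := fun v ↦ c₂ * ζ₂ v + β) (x₁ := x₁) (x₁' := x₁') (x₂ := x₂) (x₂' := x₂')
      (by fun_prop) (by linarith) (by linarith) fun y₂ hy ↦ ?_
    simpa using hmin_sq x₁ y₂ (by linarith)
  · refine le_of_mul_le_mul_left ?_ hc₂
    refine apply_le_apply_of_minimal_perturbation (fun v ↦ c₂ * ζ₂ v)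
      (g := fun u ↦ c₁ * ζ₁ u + β) (x₁ := x₂) (x₁' := x₂') (x₂ := x₁) (x₂' := x₁')
      (by fun_prop) (by linarith) (by linarith) fun y₁ hy ↦ ?_
    simpa [add_comm] using hmin_sq y₁ x₂ (by linarith)

theorem stmt_4 {d₁ d₂ : ℕ}
    (ζ₁ : EuclideanSpace ℝ (Fin d₁) → ℝ) (ζ₂ : EuclideanSpace ℝ (Fin d₂) → ℝ)
    (τ₁ τ₂ : ℝ) (hτ₁ : 0 < τ₁) (hτ₂ : 0 < τ₂)
    (hL₁ : ∀ u v, |ζ₁ u - ζ₁ v| ≤ τ₁ * ‖u - v‖)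
    (hL₂ : ∀ u v, |ζ₂ u - ζ₂ v| ≤ τ₂ * ‖u - v‖)
    (c₁ c₂ β : ℝ) (hc₁ : 0 < c₁) (hc₂ : 0 < c₂)
    (x₁ : EuclideanSpace ℝ (Fin d₁)) (x₂ : EuclideanSpace ℝ (Fin d₂))
    (hx : 0 < c₁ * ζ₁ x₁ + c₂ * ζ₂ x₂ + β)
    (hcont : Continuous ζ₂)
    (x₁' : EuclideanSpace ℝ (Fin d₁)) (x₂' : EuclideanSpace ℝ (Fin d₂))
    (hfeas : c₁ * ζ₁ x₁' + c₂ * ζ₂ x₂' + β = 0)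
    (hmin : ∀ (y₁ : EuclideanSpace ℝ (Fin d₁)) (y₂ : EuclideanSpace ℝ (Fin d₂)),
      c₁ * ζ₁ y₁ + c₂ * ζ₂ y₂ + β = 0 →
      Real.sqrt (‖x₁ - x₁'‖ ^ 2 + ‖x₂ - x₂'‖ ^ 2) ≤
        Real.sqrt (‖x₁ - y₁‖ ^ 2 + ‖x₂ - y₂‖ ^ 2)) :
    ζ₁ x₁' ≤ ζ₁ x₁ ∧ ζ₂ x₂' ≤ ζ₂ x₂ :=
  stmt_4_general ζ₁ ζ₂ τ₁ hL₁ c₁ c₂ β hc₁ hc₂ x₁ x₂ hx hcont x₁' x₂' hfeas hmin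
end

section
/- Let γ¹ : ℝ^{d₁} → ℝ and γ² : ℝ^{d₂} → ℝ be Lipschitz with constants L¹, L² > 0 respectively, and let β̃ ∈ ℝ. Suppose x = (x¹, x²) satisfies γ¹(x¹) + γ²(x²) + β̃ > 0. Then every x' = (x'¹, x'²) with γ¹(x'¹) + γ²(x'²) + β̃ = 0 satisfies ‖x − x'‖₂ ≥ (γ¹(x¹) + γ²(x²) + β̃) / √((L¹)² + (L²)²). -/
/-!
The map `(u, v) ↦ γ₁ u + γ₂ v` is `√(L₁² + L₂²)`-Lipschitz for the `ℓ²` norm on pairs, by the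
Cauchy–Schwarz inequality `L₁ a + L₂ b ≤ √(L₁² + L₂²) √(a² + b²)`. A function that is
`L`-Lipschitz cannot drop from the value `c` to `0` over a distance smaller than `c / L`.
-/

open WithLp

lemma Real.mul_add_mul_le_sqrt_mul_sqrt (a₁ a₂ b₁ b₂ : ℝ) :
    a₁ * b₁ + a₂ * b₂ ≤ √(a₁ ^ 2 + a₂ ^ 2) * √(b₁ ^ 2 + b₂ ^ 2) := by
  simpa [Fin.sum_univ_two] using Real.sum_mul_le_sqrt_mul_sqrt Finset.univ ![a₁, a₂] ![b₁, b₂]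

lemma WithLp.abs_add_sub_add_le_sqrt_mul_norm {E F : Type*}
    [SeminormedAddCommGroup E] [SeminormedAddCommGroup F]
    {γ₁ : E → ℝ} {γ₂ : F → ℝ} {L₁ L₂ : ℝ}
    (h₁ : ∀ u v, |γ₁ u - γ₁ v| ≤ L₁ * ‖u - v‖) (h₂ : ∀ u v, |γ₂ u - γ₂ v| ≤ L₂ * ‖u - v‖)
    (x y : WithLp 2 (E × F)) :
    |γ₁ x.fst + γ₂ x.snd - (γ₁ y.fst + γ₂ y.snd)| ≤ √(L₁ ^ 2 + L₂ ^ 2) * ‖x - y‖ := by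
  have h₁' : |γ₁ x.fst - γ₁ y.fst| ≤ |L₁| * ‖(x - y).fst‖ :=
    (h₁ _ _).trans (mul_le_mul_of_nonneg_right (le_abs_self L₁) (norm_nonneg _))
  have h₂' : |γ₂ x.snd - γ₂ y.snd| ≤ |L₂| * ‖(x - y).snd‖ :=
    (h₂ _ _).trans (mul_le_mul_of_nonneg_right (le_abs_self L₂) (norm_nonneg _))
  calc |γ₁ x.fst + γ₂ x.snd - (γ₁ y.fst + γ₂ y.snd)|
      ≤ |γ₁ x.fst - γ₁ y.fst| + |γ₂ x.snd - γ₂ y.snd| := by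
        rw [add_sub_add_comm]; exact abs_add_le _ _
    _ ≤ |L₁| * ‖(x - y).fst‖ + |L₂| * ‖(x - y).snd‖ := add_le_add h₁' h₂'
    _ ≤ √(|L₁| ^ 2 + |L₂| ^ 2) * √(‖(x - y).fst‖ ^ 2 + ‖(x - y).snd‖ ^ 2) :=
        Real.mul_add_mul_le_sqrt_mul_sqrt _ _ _ _
    _ = √(L₁ ^ 2 + L₂ ^ 2) * ‖x - y‖ := by rw [sq_abs, sq_abs, prod_norm_eq_of_L2]

lemma div_le_norm_sub_of_eq_zero {E : Type*} [SeminormedAddCommGroup E] {f : E → ℝ} {L : ℝ}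
    (hf : ∀ u v, |f u - f v| ≤ L * ‖u - v‖) (hL : 0 ≤ L) {x y : E} (hy : f y = 0) :
    f x / L ≤ ‖x - y‖ :=
  div_le_of_le_mul₀ hL (norm_nonneg _) <| by
    simpa [hy, mul_comm] using (le_abs_self _).trans (hf x y)

theorem stmt_7_general {d₁ d₂ : ℕ}
    (γ₁ : EuclideanSpace ℝ (Fin d₁) → ℝ) (γ₂ : EuclideanSpace ℝ (Fin d₂) → ℝ)
    (L₁ L₂ : ℝ)
    (hLip₁ : ∀ u v, |γ₁ u - γ₁ v| ≤ L₁ * ‖u - v‖)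
    (hLip₂ : ∀ u v, |γ₂ u - γ₂ v| ≤ L₂ * ‖u - v‖)
    (βt : ℝ)
    (x₁ : EuclideanSpace ℝ (Fin d₁)) (x₂ : EuclideanSpace ℝ (Fin d₂)) :
    ∀ (x₁' : EuclideanSpace ℝ (Fin d₁)) (x₂' : EuclideanSpace ℝ (Fin d₂)),
      γ₁ x₁' + γ₂ x₂' + βt = 0 →
      Real.sqrt (‖x₁ - x₁'‖ ^ 2 + ‖x₂ - x₂'‖ ^ 2) ≥
        (γ₁ x₁ + γ₂ x₂ + βt) / Real.sqrt (L₁ ^ 2 + L₂ ^ 2) := by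
  intro x₁' x₂' hzero
  let γ : WithLp 2 (EuclideanSpace ℝ (Fin d₁) × EuclideanSpace ℝ (Fin d₂)) → ℝ :=
    fun x ↦ γ₁ x.fst + γ₂ x.snd + βt
  have hγ : ∀ x y, |γ x - γ y| ≤ √(L₁ ^ 2 + L₂ ^ 2) * ‖x - y‖ := fun x y ↦ by
    simpa only [γ, add_sub_add_right_eq_sub] using
      abs_add_sub_add_le_sqrt_mul_norm hLip₁ hLip₂ x y
  have := div_le_norm_sub_of_eq_zero hγ (Real.sqrt_nonneg _)
    (x := toLp 2 (x₁, x₂)) (y := toLp 2 (x₁', x₂')) hzero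
  simpa [γ, prod_norm_eq_of_L2] using this

theorem stmt_7 {d₁ d₂ : ℕ}
    (γ₁ : EuclideanSpace ℝ (Fin d₁) → ℝ) (γ₂ : EuclideanSpace ℝ (Fin d₂) → ℝ)
    (L₁ L₂ : ℝ) (hL₁pos : 0 < L₁) (hL₂pos : 0 < L₂)
    (hLip₁ : ∀ u v, |γ₁ u - γ₁ v| ≤ L₁ * ‖u - v‖)
    (hLip₂ : ∀ u v, |γ₂ u - γ₂ v| ≤ L₂ * ‖u - v‖)
    (βt : ℝ)
    (x₁ : EuclideanSpace ℝ (Fin d₁)) (x₂ : EuclideanSpace ℝ (Fin d₂))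
    (hx : 0 < γ₁ x₁ + γ₂ x₂ + βt) :
    ∀ (x₁' : EuclideanSpace ℝ (Fin d₁)) (x₂' : EuclideanSpace ℝ (Fin d₂)),
      γ₁ x₁' + γ₂ x₂' + βt = 0 →
      Real.sqrt (‖x₁ - x₁'‖ ^ 2 + ‖x₂ - x₂'‖ ^ 2) ≥
        (γ₁ x₁ + γ₂ x₂ + βt) / Real.sqrt (L₁ ^ 2 + L₂ ^ 2) :=
  stmt_7_general γ₁ γ₂ L₁ L₂ hLip₁ hLip₂ βt x₁ x₂
end

section
/- Let l ≥ 1, and for each m ∈ {1, …, l} let ζ^{(m)} : ℝ^{d_m} → ℝ be Lipschitz with constant τ^{(m)} > 0, and let c^{(m)} > 0, β ∈ ℝ. Suppose x = (x^{(1)}, …, x^{(l)}) satisfies Σ_m c^{(m)} ζ^{(m)}(x^{(m)}) + β > 0. Then every x' = (x'^{(1)}, …, x'^{(l)}) with Σ_m c^{(m)} ζ^{(m)}(x'^{(m)}) + β = 0 satisfies ‖x − x'‖₂ ≥ (Σ_m c^{(m)} ζ^{(m)}(x^{(m)}) + β) / √(Σ_m (c^{(m)} τ^{(m)})²). -/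
/-! As the value at `x'` is zero, the value at `x` is `∑ c m (ζ m (x m) - ζ m (x' m))`, which the
Lipschitz bounds dominate by `∑ (c m τ m) ‖x m - x' m‖`; Cauchy–Schwarz bounds this by
`√(∑ (c m τ m)²) · ‖x - x'‖₂`. -/

open Finset

section WeightedSum

variable {ι : Type*} (s : Finset ι) {E : ι → Type*} [∀ i, SeminormedAddGroup (E i)]
  (ζ : ∀ i, E i → ℝ) (τ c : ι → ℝ)

theorem sum_mul_sub_sum_mul_le_sum_mul_norm (hc : ∀ i ∈ s, 0 ≤ c i)
    (hLip : ∀ i, ∀ u v, |ζ i u - ζ i v| ≤ τ i * ‖u - v‖) (x y : ∀ i, E i) :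
    ∑ i ∈ s, c i * ζ i (x i) - ∑ i ∈ s, c i * ζ i (y i) ≤
      ∑ i ∈ s, c i * τ i * ‖x i - y i‖ := by
  rw [← sum_sub_distrib]
  refine sum_le_sum fun i hi => ?_
  calc c i * ζ i (x i) - c i * ζ i (y i) = c i * (ζ i (x i) - ζ i (y i)) := by ring
    _ ≤ c i * (τ i * ‖x i - y i‖) :=
      mul_le_mul_of_nonneg_left ((le_abs_self _).trans (hLip i _ _)) (hc i hi)
    _ = c i * τ i * ‖x i - y i‖ := by ring

theorem sum_mul_sub_sum_mul_le_sqrt_mul_sqrt (hc : ∀ i ∈ s, 0 ≤ c i)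
    (hLip : ∀ i, ∀ u v, |ζ i u - ζ i v| ≤ τ i * ‖u - v‖) (x y : ∀ i, E i) :
    ∑ i ∈ s, c i * ζ i (x i) - ∑ i ∈ s, c i * ζ i (y i) ≤
      √(∑ i ∈ s, (c i * τ i) ^ 2) * √(∑ i ∈ s, ‖x i - y i‖ ^ 2) :=
  (sum_mul_sub_sum_mul_le_sum_mul_norm s ζ τ c hc hLip x y).trans
    (Real.sum_mul_le_sqrt_mul_sqrt s _ _)

end WeightedSum

theorem stmt_8_general {l : ℕ} (d : Fin l → ℕ)
    (ζ : ∀ m : Fin l, EuclideanSpace ℝ (Fin (d m)) → ℝ)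
    (τ c : Fin l → ℝ) (hc : ∀ m, 0 < c m) (β : ℝ)
    (hLip : ∀ m, ∀ u v, |ζ m u - ζ m v| ≤ τ m * ‖u - v‖)
    (x : ∀ m : Fin l, EuclideanSpace ℝ (Fin (d m))) :
    ∀ x' : ∀ m : Fin l, EuclideanSpace ℝ (Fin (d m)),
      ∑ m, c m * ζ m (x' m) + β = 0 →
      Real.sqrt (∑ m, ‖x m - x' m‖ ^ 2) ≥
        (∑ m, c m * ζ m (x m) + β) / Real.sqrt (∑ m, (c m * τ m) ^ 2) := by
  intro x' hx'
  have hgap := sum_mul_sub_sum_mul_le_sqrt_mul_sqrt univ ζ τ c (fun m _ => (hc m).le) hLip x x'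
  refine div_le_of_le_mul₀ (Real.sqrt_nonneg _) (Real.sqrt_nonneg _) ?_
  linarith

theorem stmt_8 {l : ℕ} (hl : 1 ≤ l) (d : Fin l → ℕ)
    (ζ : ∀ m : Fin l, EuclideanSpace ℝ (Fin (d m)) → ℝ)
    (τ c : Fin l → ℝ) (hτ : ∀ m, 0 < τ m) (hc : ∀ m, 0 < c m) (β : ℝ)
    (hLip : ∀ m, ∀ u v, |ζ m u - ζ m v| ≤ τ m * ‖u - v‖)
    (x : ∀ m : Fin l, EuclideanSpace ℝ (Fin (d m)))
    (hx : 0 < ∑ m, c m * ζ m (x m) + β) :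
    ∀ x' : ∀ m : Fin l, EuclideanSpace ℝ (Fin (d m)),
      ∑ m, c m * ζ m (x' m) + β = 0 →
      Real.sqrt (∑ m, ‖x m - x' m‖ ^ 2) ≥
        (∑ m, c m * ζ m (x m) + β) / Real.sqrt (∑ m, (c m * τ m) ^ 2) :=
  stmt_8_general d ζ τ c hc β hLip x
end
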